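/- Fix n ≥ 0 and assume that for all t the matrices V_n(t), V_{n+1}(t) and H_n(t) are invertible, with a_n = −V_{n+1} V_n^{-1}. Then for all t ∈ ℝ: ∂_t H_{n+1} = a_n · (∂_t H_n) · a_n^T and ∂_t ξ_{n+1,n} = a_n · (∂_t H_n) · H_n^{-1}. -/

import Mathlib

open Matrix

attribute [local instance] Matrix.normedAddCommGroup Matrix.normedSpace

noncomputable section

/-- `M_p`: real `p × p` matrices. -/
abbrev Mp (p : ℕ) := Matrix (Fin p) (Fin p) ℝ

/-- The block moment matrix `M_n(t) = (m_{i,j}(t))_{0 ≤ i,j ≤ n−1}`, an `np × np` real matrix. -/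
def blockM {p : ℕ} (m : ℕ → ℕ → ℝ → Mp p) (n : ℕ) (t : ℝ) :
    Matrix (Fin n × Fin p) (Fin n × Fin p) ℝ :=
  Matrix.of fun a b => m a.1 b.1 t a.2 b.2

/-- The row of moments `(m_{n,0}(t), …, m_{n,n−1}(t))`, a `p × np` matrix. -/
def rowm {p : ℕ} (m : ℕ → ℕ → ℝ → Mp p) (n : ℕ) (t : ℝ) : Matrix (Fin p) (Fin n × Fin p) ℝ :=
  Matrix.of fun a b => m n b.1 t a b.2

/-- `ξ_{n,i}(t)`, defined by `(ξ_{n,0},…,ξ_{n,n−1}) = −(m_{n,0},…,m_{n,n−1}) M_n⁻¹` pointwise in `t`. -/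
def xiD {p : ℕ} (m : ℕ → ℕ → ℝ → Mp p) (n : ℕ) (i : Fin n) (t : ℝ) : Mp p :=
  Matrix.of fun a b => ((-(rowm m n t)) * (blockM m n t)⁻¹) a (i, b)

/-- `H_n(t) = m_{n,n}(t) + Σ_{i=0}^{n−1} ξ_{n,i}(t) m_{i,n}(t)`. -/
def HmatD {p : ℕ} (m : ℕ → ℕ → ℝ → Mp p) (n : ℕ) (t : ℝ) : Mp p :=
  m n n t + ∑ i : Fin n, xiD m n i t * m i n t

/-- `V_n(t) = φ_n(t) + Σ_{i=0}^{n−1} ξ_{n,i}(t) φ_i(t)`. -/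
def VD {p : ℕ} (m : ℕ → ℕ → ℝ → Mp p) (φ : ℕ → ℝ → Mp p) (n : ℕ) (t : ℝ) : Mp p :=
  φ n t + ∑ i : Fin n, xiD m n i t * φ i t

/-- `a_n(t) = −V_{n+1}(t) V_n(t)⁻¹`. -/
def aD {p : ℕ} (m : ℕ → ℕ → ℝ → Mp p) (φ : ℕ → ℝ → Mp p) (n : ℕ) (t : ℝ) : Mp p :=
  -(VD m φ (n + 1) t * (VD m φ n t)⁻¹)

/-- `P_n(t,x) = x^n I + Σ_{i=0}^{n−1} ξ_{n,i}(t) x^i`. -/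
def Ppol {p : ℕ} (m : ℕ → ℕ → ℝ → Mp p) (n : ℕ) (t : ℝ) (x : ℝ) : Mp p :=
  x ^ n • (1 : Mp p) + ∑ i : Fin n, x ^ (i : ℕ) • xiD m n i t

/-!
Let `c_N = (ξ_{N,0}, …, ξ_{N,N−1}, I)` be the coefficients of `P_N`. The definition of `ξ_N` says
`Σ_i c_{N,i} m_{i,j} = 0` for `j < N`, while the same sum at `j = N` is `H_N`; by the symmetry of
the moments, `H_N = Σ_{i,j} c_{N,i} m_{i,j} c_{N,j}ᵀ` is symmetric and `Σ_j m_{i,j} c_{N,j}ᵀ`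
vanishes for `i < N`. Differentiating the orthogonality relations with `∂_t m_{i,j} = φ_i φ_j`
gives `Σ_i ∂_t ξ_{N,i} m_{i,j} = −V_N φ_j` for `j < N`; pairing this with `c_Nᵀ` and with
`c_{N−1}ᵀ` yields `∂_t H_N = V_N W_Nᵀ` and `∂_t ξ_{N,N−1} H_{N−1} = −V_N W_{N−1}ᵀ`, where `W_N` is
`V_N` built from the `φ_iᵀ`. Finally `∂_t m_{i,j} = (∂_t m_{j,i})ᵀ` forces `φ_i φ_j = φ_iᵀ φ_jᵀ`,
hence `V_a W_bᵀ = W_a V_bᵀ`, and both claims follow after cancelling `V_n⁻¹ V_n`.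
-/

section MatrixCalculus

variable {ι κ ρ : Type*} {t : ℝ}

theorem HasDerivAt.matrix_apply [Fintype κ] {F : ℝ → Matrix ι κ ℝ} {F' : Matrix ι κ ℝ}
    (h : HasDerivAt F F' t) (a : ι) (b : κ) : HasDerivAt (fun s => F s a b) (F' a b) t :=
  hasDerivAt_pi.1 (hasDerivAt_pi.1 h a) b

theorem HasDerivAt.matrix_transpose [Fintype ι] [Fintype κ] {F : ℝ → Matrix ι κ ℝ}
    {F' : Matrix ι κ ℝ} (h : HasDerivAt F F' t) : HasDerivAt (fun s => (F s)ᵀ) F'ᵀ t :=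
  hasDerivAt_pi.2 fun b => hasDerivAt_pi.2 fun a => h.matrix_apply a b

theorem HasDerivAt.matrix_mul [Fintype κ] [Fintype ρ] {F : ℝ → Matrix ι κ ℝ}
    {G : ℝ → Matrix κ ρ ℝ} {F' : Matrix ι κ ℝ} {G' : Matrix κ ρ ℝ}
    (hF : HasDerivAt F F' t) (hG : HasDerivAt G G' t) :
    HasDerivAt (fun s => F s * G s) (F' * G t + F t * G') t := by
  refine hasDerivAt_pi.2 fun a => hasDerivAt_pi.2 fun b => ?_
  simpa only [mul_apply, Matrix.add_apply, ← Finset.sum_add_distrib] using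
    HasDerivAt.fun_sum fun k (_ : k ∈ Finset.univ) =>
      (hF.matrix_apply a k).fun_mul (hG.matrix_apply k b)

theorem DifferentiableAt.matrix_mul [Fintype ι] [Fintype κ] [Fintype ρ]
    {F : ℝ → Matrix ι κ ℝ} {G : ℝ → Matrix κ ρ ℝ}
    (hF : DifferentiableAt ℝ F t) (hG : DifferentiableAt ℝ G t) :
    DifferentiableAt ℝ (fun s => F s * G s) t :=
  (hF.hasDerivAt.matrix_mul hG.hasDerivAt).differentiableAt

variable [Fintype ι] [DecidableEq ι] {B : ℝ → Matrix ι ι ℝ}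

theorem DifferentiableAt.matrix_det (h : DifferentiableAt ℝ B t) :
    DifferentiableAt ℝ (fun s => (B s).det) t := by
  simp only [det_apply']
  exact DifferentiableAt.fun_sum fun σ _ => (differentiableAt_const _).mul
    (DifferentiableAt.fun_finsetProd fun i _ =>
      differentiableAt_pi.1 (differentiableAt_pi.1 h (σ i)) i)

theorem DifferentiableAt.matrix_updateRow (h : DifferentiableAt ℝ B t) (j : ι) (v : ι → ℝ) :
    DifferentiableAt ℝ (fun s => (B s).updateRow j v) t := by
  refine differentiableAt_pi.2 fun a => differentiableAt_pi.2 fun b => ?_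
  by_cases ha : a = j
  · simp [ha]
  · simpa [ha] using differentiableAt_pi.1 (differentiableAt_pi.1 h a) b

theorem DifferentiableAt.matrix_inv (h : DifferentiableAt ℝ B t) (hB : IsUnit (B t).det) :
    DifferentiableAt ℝ (fun s => (B s)⁻¹) t := by
  have hadj : DifferentiableAt ℝ (fun s => (B s).adjugate) t :=
    differentiableAt_pi.2 fun a => differentiableAt_pi.2 fun b => by
      simpa only [adjugate_apply] using (h.matrix_updateRow b (Pi.single a 1)).matrix_det
  simp only [inv_def, Ring.inverse_eq_inv]
  exact (h.matrix_det.inv hB.ne_zero).smul hadj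

end MatrixCalculus

section Orthogonality

variable {p : ℕ} {m : ℕ → ℕ → ℝ → Mp p} {N : ℕ} {t : ℝ}

/-- The coefficients of `P_N`, the leading `I` being the last entry. -/
def pcoeff (m : ℕ → ℕ → ℝ → Mp p) (N : ℕ) (t : ℝ) : Fin (N + 1) → Mp p :=
  Fin.snoc (fun i => xiD m N i t) 1

theorem sum_pcoeff_mul (x : ℕ → Mp p) :
    ∑ i : Fin (N + 1), pcoeff m N t i * x i = x N + ∑ i : Fin N, xiD m N i t * x i := by
  simp [pcoeff, Fin.sum_univ_castSucc, add_comm]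

theorem sum_mul_pcoeff_transpose (x : ℕ → Mp p) :
    ∑ j : Fin (N + 1), x j * (pcoeff m N t j)ᵀ = x N + ∑ j : Fin N, x j * (xiD m N j t)ᵀ := by
  simp [pcoeff, Fin.sum_univ_castSucc, add_comm]

theorem m_add_sum_xiD_mul_m (hM : IsUnit (blockM m N t)) (j : Fin N) :
    m N j t + ∑ i : Fin N, xiD m N i t * m i j t = 0 := by
  have hrow : -rowm m N t * (blockM m N t)⁻¹ * blockM m N t = -rowm m N t :=
    nonsing_inv_mul_cancel_right _ (-rowm m N t) ((isUnit_iff_isUnit_det _).mp hM)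
  ext a b
  have h := congrFun (congrFun hrow a) (j, b)
  rw [mul_apply, Fintype.sum_prod_type] at h
  simpa [Matrix.sum_apply, mul_apply, xiD, blockM, rowm, eq_neg_iff_add_eq_zero, add_comm] using h

theorem sum_pcoeff_mul_m (hM : IsUnit (blockM m N t)) (j : Fin (N + 1)) :
    ∑ i, pcoeff m N t i * m i j t = if j = Fin.last N then HmatD m N t else 0 := by
  refine (sum_pcoeff_mul fun i => m i j t).trans ?_
  induction j using Fin.lastCases with
  | last => simp [HmatD]
  | cast j => simpa [Fin.castSucc_ne_last] using m_add_sum_xiD_mul_m hM j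

theorem HmatD_eq_sum_sum (hM : IsUnit (blockM m N t)) :
    HmatD m N t =
      ∑ i : Fin (N + 1), ∑ j : Fin (N + 1), pcoeff m N t i * m i j t * (pcoeff m N t j)ᵀ := by
  rw [Finset.sum_comm]
  simp_rw [← Finset.sum_mul, sum_pcoeff_mul_m hM]
  simp [pcoeff]

theorem HmatD_transpose (hsym : ∀ i j t, m i j t = (m j i t)ᵀ) (hM : IsUnit (blockM m N t)) :
    (HmatD m N t)ᵀ = HmatD m N t := by
  rw [HmatD_eq_sum_sum hM]
  simp only [transpose_sum, transpose_mul, transpose_transpose, ← hsym, mul_assoc]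
  rw [Finset.sum_comm]

theorem sum_m_mul_pcoeff_transpose (hsym : ∀ i j t, m i j t = (m j i t)ᵀ)
    (hM : IsUnit (blockM m N t)) (i : Fin (N + 1)) :
    ∑ j : Fin (N + 1), m i j t * (pcoeff m N t j)ᵀ = if i = Fin.last N then HmatD m N t else 0 := by
  calc ∑ j : Fin (N + 1), m i j t * (pcoeff m N t j)ᵀ
      = (∑ j : Fin (N + 1), pcoeff m N t j * m j i t)ᵀ := by
        simp only [transpose_sum, transpose_mul, ← hsym]
    _ = _ := by
        rw [sum_pcoeff_mul_m hM]
        split_ifs <;> simp [HmatD_transpose hsym hM]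

end Orthogonality

section Derivatives

variable {p : ℕ} {m : ℕ → ℕ → ℝ → Mp p} {φ : ℕ → ℝ → Mp p} {N : ℕ} {t : ℝ}

theorem differentiableAt_xiD (hm : ∀ i j, DifferentiableAt ℝ (m i j) t)
    (hM : IsUnit (blockM m N t)) (i : Fin N) : DifferentiableAt ℝ (xiD m N i) t := by
  have hentry : ∀ i j a b, DifferentiableAt ℝ (fun s => m i j s a b) t := fun i j a b =>
    differentiableAt_pi.1 (differentiableAt_pi.1 (hm i j) a) b
  have hblock : DifferentiableAt ℝ (blockM m N) t :=
    differentiableAt_pi.2 fun c => differentiableAt_pi.2 fun d => hentry _ _ _ _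
  have hrow : DifferentiableAt ℝ (rowm m N) t :=
    differentiableAt_pi.2 fun a => differentiableAt_pi.2 fun d => hentry _ _ _ _
  have hprod := hrow.neg.matrix_mul (hblock.matrix_inv ((isUnit_iff_isUnit_det _).mp hM))
  exact differentiableAt_pi.2 fun a => differentiableAt_pi.2 fun b =>
    differentiableAt_pi.1 (differentiableAt_pi.1 hprod a) (i, b)

theorem phi_mul_phi_eq_transpose (hsym : ∀ i j t, m i j t = (m j i t)ᵀ)
    (hm : ∀ i j t, HasDerivAt (m i j) (φ i t * φ j t) t) (i j : ℕ) :
    φ i t * φ j t = (φ i t)ᵀ * (φ j t)ᵀ := by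
  have h := (hm j i t).matrix_transpose
  rw [show (fun s => (m j i s)ᵀ) = m i j from funext fun s => (hsym i j s).symm] at h
  rw [(hm i j t).unique h, transpose_mul]

def WD (m : ℕ → ℕ → ℝ → Mp p) (φ : ℕ → ℝ → Mp p) (N : ℕ) (t : ℝ) : Mp p :=
  ∑ i : Fin (N + 1), pcoeff m N t i * (φ i t)ᵀ

theorem VD_eq_sum_pcoeff_mul : VD m φ N t = ∑ i : Fin (N + 1), pcoeff m N t i * φ i t :=
  (sum_pcoeff_mul fun i => φ i t).symm

theorem WD_transpose :
    (WD m φ N t)ᵀ = ∑ j : Fin (N + 1), φ j t * (pcoeff m N t j)ᵀ := by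
  simp [WD, transpose_sum, transpose_mul]

theorem VD_mul_WD_transpose (hsym : ∀ i j t, m i j t = (m j i t)ᵀ)
    (hm : ∀ i j t, HasDerivAt (m i j) (φ i t * φ j t) t) (a b : ℕ) :
    VD m φ a t * (WD m φ b t)ᵀ = WD m φ a t * (VD m φ b t)ᵀ := by
  rw [VD_eq_sum_pcoeff_mul, WD_transpose, WD, VD_eq_sum_pcoeff_mul]
  simp only [transpose_sum, transpose_mul, Finset.sum_mul_sum]
  refine Finset.sum_congr rfl fun i _ => Finset.sum_congr rfl fun j _ => ?_
  rw [mul_assoc, ← mul_assoc (φ i t), phi_mul_phi_eq_transpose hsym hm, mul_assoc, mul_assoc]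

theorem hasDerivAt_m_add_sum_xiD_mul_m (hm : ∀ i j t, HasDerivAt (m i j) (φ i t * φ j t) t)
    (hM : IsUnit (blockM m N t)) (j : ℕ) :
    HasDerivAt (fun s => m N j s + ∑ i : Fin N, xiD m N i s * m i j s)
      (∑ i : Fin N, deriv (xiD m N i) t * m i j t + VD m φ N t * φ j t) t := by
  have hξ : ∀ i, HasDerivAt (xiD m N i) (deriv (xiD m N i) t) t := fun i =>
    (differentiableAt_xiD (fun i j => (hm i j t).differentiableAt) hM i).hasDerivAt
  refine ((hm N j t).add
    (HasDerivAt.fun_sum fun i _ => (hξ i).matrix_mul (hm i j t))).congr_deriv ?_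
  simp only [VD, add_mul, Finset.sum_mul, Finset.sum_add_distrib, mul_assoc]
  abel

theorem sum_deriv_xiD_mul_m (hm : ∀ i j t, HasDerivAt (m i j) (φ i t * φ j t) t)
    (hM : ∀ t, IsUnit (blockM m N t)) (j : Fin N) :
    ∑ i : Fin N, deriv (xiD m N i) t * m i j t = -(VD m φ N t * φ j t) := by
  have h := hasDerivAt_m_add_sum_xiD_mul_m hm (hM t) j
  rw [show (fun s => m N j s + ∑ i : Fin N, xiD m N i s * m i j s) = fun _ => 0 from
    funext fun s => m_add_sum_xiD_mul_m (hM s) j] at h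
  exact eq_neg_of_add_eq_zero_left (h.unique (hasDerivAt_const t 0))

theorem hasDerivAt_HmatD (hsym : ∀ i j t, m i j t = (m j i t)ᵀ)
    (hm : ∀ i j t, HasDerivAt (m i j) (φ i t * φ j t) t) (hM : ∀ t, IsUnit (blockM m N t)) :
    HasDerivAt (HmatD m N) (VD m φ N t * (WD m φ N t)ᵀ) t := by
  refine (hasDerivAt_m_add_sum_xiD_mul_m hm (hM t) N).congr_deriv ?_
  have hcol : ∀ i : Fin N, m i N t = -∑ j : Fin N, m i j t * (xiD m N j t)ᵀ := fun i => by
    have h := (sum_mul_pcoeff_transpose fun j => m i j t).symm.trans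
      (sum_m_mul_pcoeff_transpose hsym (hM t) i.castSucc)
    rw [if_neg (Fin.castSucc_ne_last i)] at h
    exact eq_neg_of_add_eq_zero_left h
  calc ∑ i : Fin N, deriv (xiD m N i) t * m i N t + VD m φ N t * φ N t
      = -∑ j : Fin N, (∑ i : Fin N, deriv (xiD m N i) t * m i j t) * (xiD m N j t)ᵀ
          + VD m φ N t * φ N t := by
        simp only [hcol, mul_neg, Finset.sum_neg_distrib, Finset.mul_sum, Finset.sum_mul,
          mul_assoc]
        rw [Finset.sum_comm]
    _ = VD m φ N t * (WD m φ N t)ᵀ := by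
        rw [WD_transpose, sum_mul_pcoeff_transpose fun j => φ j t]
        simp only [sum_deriv_xiD_mul_m hm hM, neg_mul, Finset.sum_neg_distrib, neg_neg, mul_add,
          Finset.mul_sum, mul_assoc]
        abel

theorem deriv_xiD_last_mul_HmatD (hsym : ∀ i j t, m i j t = (m j i t)ᵀ)
    (hm : ∀ i j t, HasDerivAt (m i j) (φ i t * φ j t) t)
    (hM : ∀ n t, IsUnit (blockM m n t)) (n : ℕ) :
    deriv (xiD m (n + 1) (Fin.last n)) t * HmatD m n t
      = -(VD m φ (n + 1) t * (WD m φ n t)ᵀ) := by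
  calc deriv (xiD m (n + 1) (Fin.last n)) t * HmatD m n t
      = ∑ j : Fin (n + 1), (∑ i : Fin (n + 1), deriv (xiD m (n + 1) i) t * m i j t)
          * (pcoeff m n t j)ᵀ := by
        simp only [Finset.sum_mul, mul_assoc]
        rw [Finset.sum_comm]
        simp only [← Finset.mul_sum, sum_m_mul_pcoeff_transpose hsym (hM n t)]
        simp
    _ = -(VD m φ (n + 1) t * (WD m φ n t)ᵀ) := by
        simp only [sum_deriv_xiD_mul_m hm (hM (n + 1)), WD_transpose, neg_mul, Finset.mul_sum,
          Finset.sum_neg_distrib, mul_assoc]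

end Derivatives

theorem stmt15_general {p : ℕ} (m : ℕ → ℕ → ℝ → Mp p) (φ : ℕ → ℝ → Mp p)
    (hsym : ∀ i j t, m i j t = (m j i t)ᵀ)
    (hderiv : ∀ i j t, HasDerivAt (m i j) (m (i + 1) j t + m i (j + 1) t) t)
    (hphi : ∀ i j t, m (i + 1) j t + m i (j + 1) t = φ i t * φ j t)
    (hM : ∀ n t, IsUnit (blockM m n t))
    (n : ℕ)
    (hV1 : ∀ t, IsUnit (VD m φ n t))
    (hH : ∀ t, IsUnit (HmatD m n t)) :
    ∀ t : ℝ,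
      deriv (HmatD m (n + 1)) t = aD m φ n t * deriv (HmatD m n) t * (aD m φ n t)ᵀ ∧
      deriv (xiD m (n + 1) ⟨n, Nat.lt_succ_self n⟩) t
        = aD m φ n t * deriv (HmatD m n) t * (HmatD m n t)⁻¹ := by
  intro t
  have hm : ∀ i j t, HasDerivAt (m i j) (φ i t * φ j t) t := fun i j t =>
    hphi i j t ▸ hderiv i j t
  have hV : IsUnit (VD m φ n t).det := (isUnit_iff_isUnit_det _).mp (hV1 t)
  have hVT : IsUnit (VD m φ n t)ᵀ.det := by rwa [det_transpose]
  have hdH : deriv (HmatD m n) t = VD m φ n t * (WD m φ n t)ᵀ :=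
    (hasDerivAt_HmatD hsym hm (hM n)).deriv
  constructor
  · calc deriv (HmatD m (n + 1)) t = VD m φ (n + 1) t * (WD m φ (n + 1) t)ᵀ :=
          (hasDerivAt_HmatD hsym hm (hM (n + 1))).deriv
      _ = VD m φ (n + 1) t * (VD m φ n t)⁻¹ * (WD m φ n t * (VD m φ (n + 1) t)ᵀ) := by
          rw [← VD_mul_WD_transpose hsym hm, mul_assoc, nonsing_inv_mul_cancel_left _ _ hV]
      _ = aD m φ n t * (WD m φ n t * (VD m φ n t)ᵀ) * (aD m φ n t)ᵀ := by
          simp only [aD, transpose_neg, transpose_mul, transpose_nonsing_inv, neg_mul, mul_neg,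
            neg_neg, mul_assoc, mul_nonsing_inv_cancel_left _ _ hVT]
      _ = aD m φ n t * deriv (HmatD m n) t * (aD m φ n t)ᵀ := by
          rw [hdH, VD_mul_WD_transpose hsym hm]
  · calc deriv (xiD m (n + 1) (Fin.last n)) t
        = deriv (xiD m (n + 1) (Fin.last n)) t * HmatD m n t * (HmatD m n t)⁻¹ :=
          (mul_nonsing_inv_cancel_right _ _ ((isUnit_iff_isUnit_det _).mp (hH t))).symm
      _ = -(VD m φ (n + 1) t * (WD m φ n t)ᵀ) * (HmatD m n t)⁻¹ := by
          rw [deriv_xiD_last_mul_HmatD hsym hm hM]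
      _ = aD m φ n t * deriv (HmatD m n) t * (HmatD m n t)⁻¹ := by
          simp only [hdH, aD, neg_mul, mul_assoc, nonsing_inv_mul_cancel_left _ _ hV]

/-- Fix `n ≥ 0` and assume that for all `t` the matrices `V_n(t)`, `V_{n+1}(t)` and `H_n(t)`
are invertible, with `a_n = −V_{n+1} V_n⁻¹`.  Then for all `t ∈ ℝ`:
`∂_t H_{n+1} = a_n (∂_t H_n) a_nᵀ` and `∂_t ξ_{n+1,n} = a_n (∂_t H_n) H_n⁻¹`. -/
theorem stmt15 {p : ℕ} (hp : 1 ≤ p) (m : ℕ → ℕ → ℝ → Mp p) (φ : ℕ → ℝ → Mp p)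
    (hsym : ∀ i j t, m i j t = (m j i t)ᵀ)
    (hderiv : ∀ i j t, HasDerivAt (m i j) (m (i + 1) j t + m i (j + 1) t) t)
    (hphi : ∀ i j t, m (i + 1) j t + m i (j + 1) t = φ i t * φ j t)
    (hM : ∀ n t, IsUnit (blockM m n t))
    (n : ℕ)
    (hV1 : ∀ t, IsUnit (VD m φ n t)) (hV2 : ∀ t, IsUnit (VD m φ (n + 1) t))
    (hH : ∀ t, IsUnit (HmatD m n t)) :
    ∀ t : ℝ,
      deriv (HmatD m (n + 1)) t = aD m φ n t * deriv (HmatD m n) t * (aD m φ n t)ᵀ ∧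
      deriv (xiD m (n + 1) ⟨n, Nat.lt_succ_self n⟩) t
        = aD m φ n t * deriv (HmatD m n) t * (HmatD m n t)⁻¹ :=
  stmt15_general m φ hsym hderiv hphi hM n hV1 hH
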